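/- arXiv:1512.03665 — 2 statements merged into one kernel-verified Lean document; each statement's English description precedes it below -/
import Mathlib

section
/- Let V : ℝ³ → ℝ be smooth, radially symmetric, bounded, with lim_{|x|→∞} |x| V(x) = −Z for some Z > 0. Let ψ ∈ C_c^∞(ℝ³) be radially symmetric with ψ ≥ 0, supp(ψ) ⊂ {x : 1 < |x| < 2}, and ‖ψ‖_{L²} = 1, and for R > 0 set ψ_R(x) = R^{−3/2} ψ(x/R). Then there exists R₀ > 0 such that for all R > R₀, the quadratic form of −Δ + V is negative at ψ_R, i.e. ∫_{ℝ³} |∇ψ_R|² dx + ∫_{ℝ³} V |ψ_R|² dx < 0. Moreover for R > R₀ the functions ψ_R, ψ_{2R}, ψ_{4R}, … have pairwise disjoint supports, so the quadratic form is negative on subspaces of arbitrarily large finite dimension. -/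
open MeasureTheory Filter Set
open scoped ENNReal Topology

noncomputable section

abbrev E3 := EuclideanSpace ℝ (Fin 3)

/-- The (classical) Laplacian on `ℝ³`. -/
def lap (f : E3 → ℝ) (x : E3) : ℝ :=
  ∑ i : Fin 3,
    fderiv ℝ (fun y => fderiv ℝ f y (EuclideanSpace.single i 1)) x (EuclideanSpace.single i 1)

/-- Smooth compactly supported test functions. -/
def IsTest (φ : E3 → ℝ) : Prop := ContDiff ℝ (⊤ : ℕ∞) φ ∧ HasCompactSupport φ

/-- Radially symmetric function. -/
def Radial (f : E3 → ℝ) : Prop := ∀ x y : E3, ‖x‖ = ‖y‖ → f x = f y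

/-- Membership in the Sobolev space `H¹(ℝ³)`. -/
def MemH1 (f : E3 → ℝ) : Prop :=
  MemLp f 2 (volume : Measure E3) ∧ MemLp (fun x => ‖gradient f x‖) 2 (volume : Measure E3)

/-- Weak (distributional) eigenfunction equation `-Δψ + Vψ = λψ`. -/
def WeakEigen (V : E3 → ℝ) (lam : ℝ) (ψ : E3 → ℝ) : Prop :=
  ∀ φ : E3 → ℝ, IsTest φ →
    (∫ x, ψ x * (-(lap φ x))) + (∫ x, V x * ψ x * φ x) = lam * ∫ x, ψ x * φ x

def hartreePot (u : E3 → ℝ) (x : E3) : ℝ := ∫ y, (u y) ^ 2 / dist x y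

/-- Gradient of a dilated and scaled function. -/
lemma grad_dilate (f : E3 → ℝ) (hf : ContDiff ℝ (⊤ : ℕ∞) f) (c r : ℝ) (x : E3) :
    gradient (fun y : E3 => c * f (r⁻¹ • y)) x = (c * r⁻¹) • gradient f (r⁻¹ • x) := by
  have hL : HasFDerivAt (fun y : E3 => r⁻¹ • y)
      (r⁻¹ • ContinuousLinearMap.id ℝ E3) x :=
    ((r⁻¹ • ContinuousLinearMap.id ℝ E3).hasFDerivAt (x := x)).congr_fderiv rfl
  have hdf := (hf.differentiable (by simp) (r⁻¹ • x)).hasFDerivAt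
  have hcomp : HasFDerivAt (fun y : E3 => f (r⁻¹ • y))
      (r⁻¹ • fderiv ℝ f (r⁻¹ • x)) x := by
    have := hdf.comp x hL
    refine this.congr_fderiv ?_
    ext v; simp
  have hmul : HasFDerivAt (fun y : E3 => c * f (r⁻¹ • y))
      ((c * r⁻¹) • fderiv ℝ f (r⁻¹ • x)) x := by
    have := hcomp.const_mul c
    refine this.congr_fderiv ?_
    rw [smul_smul]
  rw [hmul.hasGradientAt.gradient]
  unfold gradient
  simp

/-- For a Coulomb-like potential, the quadratic form of `-Δ + V` is negative
on suitably dilated radial bump functions supported in annuli, and dyadic dilates have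
pairwise disjoint supports. -/
theorem quadratic_form_negative_on_dilated_bumps
    (V : E3 → ℝ) (Z : ℝ) (hZ : 0 < Z)
    (hVsmooth : ContDiff ℝ (⊤ : ℕ∞) V) (hVrad : Radial V)
    (hVbdd : ∃ C : ℝ, ∀ x : E3, |V x| ≤ C)
    (hVcoulomb : Tendsto (fun x : E3 => ‖x‖ * V x) (cocompact E3) (𝓝 (-Z)))
    (ψ : E3 → ℝ) (hψsmooth : ContDiff ℝ (⊤ : ℕ∞) ψ) (hψsupp : HasCompactSupport ψ)
    (hψrad : Radial ψ) (hψpos : ∀ x, 0 ≤ ψ x)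
    (hψann : Function.support ψ ⊆ {x : E3 | 1 < ‖x‖ ∧ ‖x‖ < 2})
    (hψnorm : ∫ x, (ψ x) ^ 2 = 1)
    (ψR : ℝ → E3 → ℝ)
    (hψR : ∀ R : ℝ, ∀ x : E3, ψR R x = R ^ (-(3:ℝ)/2) * ψ (R⁻¹ • x)) :
    ∃ R₀ : ℝ, 0 < R₀ ∧
      (∀ R : ℝ, R₀ < R →
        (∫ x, ‖gradient (ψR R) x‖ ^ 2) + (∫ x, V x * (ψR R x) ^ 2) < 0) ∧
      (∀ R : ℝ, R₀ < R → ∀ m k : ℕ, m ≠ k →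
        Disjoint (Function.support (ψR (2 ^ m * R))) (Function.support (ψR (2 ^ k * R)))) := by
  classical
  -- tail bound from the cocompact limit
  have hmem : (fun x : E3 => ‖x‖ * V x) ⁻¹' (Set.Iio (-(Z/2))) ∈ cocompact E3 :=
    hVcoulomb (Iio_mem_nhds (by linarith))
  rw [mem_cocompact] at hmem
  obtain ⟨K, hK, hKsub⟩ := hmem
  obtain ⟨M, hM⟩ := hK.isBounded.subset_closedBall 0
  have htail : ∀ x : E3, M < ‖x‖ → ‖x‖ * V x < -(Z/2) := by
    intro x hx
    have hxK : x ∉ K := fun h => by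
      have := hM h
      simp only [Metric.mem_closedBall, dist_zero_right] at this
      linarith
    exact hKsub hxK
  set A : ℝ := ∫ x : E3, ‖gradient ψ x‖ ^ 2 with hA
  have hA0 : 0 ≤ A := integral_nonneg fun x => by positivity
  refine ⟨max (max M 1) (4 * A / Z), lt_max_of_lt_left (lt_max_of_lt_right one_pos), ?_, ?_⟩
  · -- the quadratic form is negative
    intro R hR
    have hR1 : 1 < R := lt_of_le_of_lt (le_max_of_le_left (le_max_right M 1)) hR
    have hR0 : 0 < R := lt_trans one_pos hR1
    have hRM : M < R := lt_of_le_of_lt (le_max_of_le_left (le_max_left M 1)) hR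
    have hRA : 4 * A / Z < R := lt_of_le_of_lt (le_max_right _ _) hR
    set cR : ℝ := R ^ (-(3:ℝ)/2) with hcRdef
    have hc2 : cR ^ 2 = (R ^ 3)⁻¹ := by
      rw [hcRdef, ← Real.rpow_natCast (R ^ (-(3:ℝ)/2)) 2, ← Real.rpow_mul hR0.le]
      norm_num
    have hfun : ψR R = fun y : E3 => cR * ψ (R⁻¹ • y) := funext (hψR R)
    -- kinetic term
    have hk : (∫ x, ‖gradient (ψR R) x‖ ^ 2) = A / R ^ 2 := by
      rw [hfun]
      have h1 : ∀ x : E3, ‖gradient (fun y : E3 => cR * ψ (R⁻¹ • y)) x‖ ^ 2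
          = (cR * R⁻¹) ^ 2 * ‖gradient ψ (R⁻¹ • x)‖ ^ 2 := by
        intro x
        rw [grad_dilate ψ hψsmooth cR R x, norm_smul]
        rw [mul_pow, Real.norm_eq_abs, sq_abs]
      calc (∫ x : E3, ‖gradient (fun y : E3 => cR * ψ (R⁻¹ • y)) x‖ ^ 2)
          = ∫ x : E3, (cR * R⁻¹) ^ 2 * ‖gradient ψ (R⁻¹ • x)‖ ^ 2 :=
            integral_congr_ae (Filter.Eventually.of_forall h1)
        _ = (cR * R⁻¹) ^ 2 * ∫ x : E3, ‖gradient ψ (R⁻¹ • x)‖ ^ 2 := integral_const_mul _ _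
        _ = (cR * R⁻¹) ^ 2 * (R ^ 3 * A) := by
            rw [Measure.integral_comp_inv_smul_of_nonneg volume
              (fun y => ‖gradient ψ y‖ ^ 2) hR0.le]
            simp [finrank_euclideanSpace_fin, hA]
        _ = A / R ^ 2 := by
            rw [mul_pow, hc2]
            field_simp
    -- potential term
    have hp : (∫ x, V x * (ψR R x) ^ 2) ≤ -(Z / (4 * R)) := by
      simp only [hψR]
      set f : E3 → ℝ := fun y => V (R • y) * ψ y ^ 2 with hfdef
      have hstep1 : (∫ x : E3, V x * (R ^ (-(3:ℝ)/2) * ψ (R⁻¹ • x)) ^ 2) = ∫ y : E3, f y := by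
        have h1 : ∀ x : E3, V x * (cR * ψ (R⁻¹ • x)) ^ 2 = cR ^ 2 * f (R⁻¹ • x) := by
          intro x
          have hxx : R • R⁻¹ • x = x := by
            rw [smul_smul, mul_inv_cancel₀ hR0.ne', one_smul]
          simp only [hfdef, hxx]
          ring
        calc (∫ x : E3, V x * (cR * ψ (R⁻¹ • x)) ^ 2)
            = ∫ x : E3, cR ^ 2 * f (R⁻¹ • x) :=
              integral_congr_ae (Filter.Eventually.of_forall h1)
          _ = cR ^ 2 * ∫ x : E3, f (R⁻¹ • x) := integral_const_mul _ _
          _ = cR ^ 2 * (R ^ 3 * ∫ y : E3, f y) := by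
              rw [Measure.integral_comp_inv_smul_of_nonneg volume f hR0.le]
              simp [finrank_euclideanSpace_fin]
          _ = ∫ y : E3, f y := by
              rw [hc2, ← mul_assoc, inv_mul_cancel₀ (by positivity), one_mul]
      rw [hstep1]
      have hψ2cs : HasCompactSupport (fun y : E3 => ψ y ^ 2) :=
        hψsupp.comp_left (g := fun t : ℝ => t ^ 2) (by simp)
      have hψ2int : Integrable (fun y : E3 => ψ y ^ 2) :=
        ((hψsmooth.continuous).pow 2).integrable_of_hasCompactSupport hψ2cs
      have hfint : Integrable f := by
        have hfc : Continuous f :=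
          ((hVsmooth.continuous).comp (continuous_const_smul R)).mul
            ((hψsmooth.continuous).pow 2)
        exact hfc.integrable_of_hasCompactSupport hψ2cs.mul_left
      have hpt : ∀ y : E3, f y ≤ -(Z / (4 * R)) * ψ y ^ 2 := by
        intro y
        by_cases hy : ψ y = 0
        · simp [hfdef, hy]
        · obtain ⟨hy1, hy2⟩ := hψann hy
          have hnorm : ‖R • y‖ = R * ‖y‖ := by
            rw [norm_smul, Real.norm_eq_abs, abs_of_pos hR0]
          have hbig : M < ‖R • y‖ := by
            rw [hnorm]; nlinarith
          have h := htail (R • y) hbig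
          rw [hnorm] at h
          have hVy : V (R • y) < 0 := by
            by_contra hc; push_neg at hc
            nlinarith [mul_nonneg (mul_nonneg hR0.le (norm_nonneg y)) hc]
          have h2 : 2 * R * V (R • y) ≤ R * ‖y‖ * V (R • y) := by
            nlinarith [mul_pos (mul_pos hR0 (sub_pos.mpr hy2)) (neg_pos.mpr hVy)]
          have h3 : V (R • y) ≤ -(Z / (4 * R)) := by
            rw [show -(Z / (4 * R)) = (-Z) / (4 * R) by ring]
            rw [le_div_iff₀ (by positivity)]
            nlinarith
          exact mul_le_mul_of_nonneg_right h3 (sq_nonneg _)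
      calc (∫ y : E3, f y) ≤ ∫ y : E3, -(Z / (4 * R)) * ψ y ^ 2 :=
            integral_mono hfint (hψ2int.const_mul _) hpt
        _ = -(Z / (4 * R)) := by rw [integral_const_mul, hψnorm, mul_one]
    -- combine
    have hfinal : A / R ^ 2 < Z / (4 * R) := by
      rw [div_lt_div_iff₀ (by positivity) (by positivity)]
      have h4A : 4 * A < Z * R := by
        rw [div_lt_iff₀ hZ] at hRA
        linarith
      nlinarith
    linarith
  · -- disjoint supports
    intro R hR m k hmk
    have hR1 : 1 < R := lt_of_le_of_lt (le_max_of_le_left (le_max_right M 1)) hR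
    have hR0 : 0 < R := lt_trans one_pos hR1
    have hsupp : ∀ r : ℝ, 0 < r → ∀ x : E3, ψR r x ≠ 0 → r < ‖x‖ ∧ ‖x‖ < 2 * r := by
      intro r hr x hx
      rw [hψR] at hx
      have hψx : ψ (r⁻¹ • x) ≠ 0 := fun h => hx (by rw [h, mul_zero])
      obtain ⟨h1, h2⟩ := hψann hψx
      have hnorm : ‖r⁻¹ • x‖ = r⁻¹ * ‖x‖ := by
        rw [norm_smul, Real.norm_eq_abs, abs_of_pos (inv_pos.mpr hr)]
      rw [hnorm] at h1 h2
      have hxr : ‖x‖ = r * (r⁻¹ * ‖x‖) := by field_simp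
      constructor
      · rw [hxr]; nlinarith
      · rw [hxr]; nlinarith
    have key : ∀ m k : ℕ, m < k →
        Disjoint (Function.support (ψR (2 ^ m * R))) (Function.support (ψR (2 ^ k * R))) := by
      intro m k hmk
      rw [Set.disjoint_left]
      intro x hx1 hx2
      have hm0 : (0:ℝ) < 2 ^ m * R := by positivity
      have hk0 : (0:ℝ) < 2 ^ k * R := by positivity
      obtain ⟨ha1, ha2⟩ := hsupp _ hm0 x hx1
      obtain ⟨hb1, hb2⟩ := hsupp _ hk0 x hx2
      have hpow : (2:ℝ) ^ (m + 1) ≤ 2 ^ k := by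
        exact pow_le_pow_right₀ (by norm_num) hmk
      have : ‖x‖ < ‖x‖ := by
        calc ‖x‖ < 2 * (2 ^ m * R) := ha2
          _ = 2 ^ (m + 1) * R := by ring
          _ ≤ 2 ^ k * R := mul_le_mul_of_nonneg_right hpow hR0.le
          _ < ‖x‖ := hb1
      exact lt_irrefl _ this
    rcases lt_or_gt_of_ne hmk with h | h
    · exact key m k h
    · exact (key k m h).symm
end
end

section
/- Let V : ℝ³ → ℝ be C¹, let E ∈ ℝ, and let u be a real-valued smooth solution of −Δu + Eu + Vu − φ u = 0 on ℝ³, where φ is a smooth solution of −Δφ = u². Define the energy–momentum tensor T_{ij} = 2 ∂_i u ∂_j u + ∂_i φ ∂_j φ − δ_{ij} ( |∇u|² + (1/2)|∇φ|² + V u² − φ u² + E u² ) for i, j = 1, 2, 3. Then for each i, the divergence identity ∑_{j=1}^{3} ∂_j T_{ij} = −(∂_i V) u² holds pointwise on ℝ³. -/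
open MeasureTheory Filter Set
open scoped ENNReal Topology

noncomputable section

/-- The `i`-th partial derivative on `ℝ³`. -/
def pd (i : Fin 3) (f : E3 → ℝ) (x : E3) : ℝ := fderiv ℝ f x (EuclideanSpace.single i 1)

/-- The energy–momentum tensor of the Schrödinger–Poisson system. -/
def emTensor (V : E3 → ℝ) (E : ℝ) (u φ : E3 → ℝ) (i j : Fin 3) (x : E3) : ℝ :=
  2 * pd i u x * pd j u x + pd i φ x * pd j φ x -
    (if i = j then
      (∑ k : Fin 3, (pd k u x) ^ 2) + (1 / 2) * (∑ k : Fin 3, (pd k φ x) ^ 2)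
        + V x * (u x) ^ 2 - φ x * (u x) ^ 2 + E * (u x) ^ 2
     else 0)

section Helpers

variable {f g : E3 → ℝ} {x : E3} {i j : Fin 3}

lemma pd_add (hf : DifferentiableAt ℝ f x) (hg : DifferentiableAt ℝ g x) :
    pd i (fun y => f y + g y) x = pd i f x + pd i g x := by
  simp only [pd, fderiv_fun_add hf hg, ContinuousLinearMap.add_apply]

lemma pd_sub (hf : DifferentiableAt ℝ f x) (hg : DifferentiableAt ℝ g x) :
    pd i (fun y => f y - g y) x = pd i f x - pd i g x := by
  simp only [pd, fderiv_fun_sub hf hg, ContinuousLinearMap.sub_apply]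

lemma pd_mul (hf : DifferentiableAt ℝ f x) (hg : DifferentiableAt ℝ g x) :
    pd i (fun y => f y * g y) x = pd i f x * g x + f x * pd i g x := by
  simp only [pd, fderiv_fun_mul hf hg, ContinuousLinearMap.add_apply,
    ContinuousLinearMap.smul_apply, smul_eq_mul]
  ring

lemma pd_const_mul (c : ℝ) (hf : DifferentiableAt ℝ f x) :
    pd i (fun y => c * f y) x = c * pd i f x := by
  simp only [pd, fderiv_const_mul hf c, ContinuousLinearMap.smul_apply, smul_eq_mul]

lemma pd_sq (hf : DifferentiableAt ℝ f x) :
    pd i (fun y => f y ^ 2) x = 2 * f x * pd i f x := by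
  have h : (fun y => f y ^ 2) = fun y => f y * f y := by ext y; ring
  rw [h, pd_mul hf hf]; ring

lemma pd_sum {ι : Type*} (s : Finset ι) (F : ι → E3 → ℝ)
    (hF : ∀ k ∈ s, DifferentiableAt ℝ (F k) x) :
    pd i (fun y => ∑ k ∈ s, F k y) x = ∑ k ∈ s, pd i (F k) x := by
  simp only [pd, fderiv_fun_sum hF, ContinuousLinearMap.sum_apply]

lemma contDiff_pd (hf : ContDiff ℝ (⊤ : ℕ∞) f) (i : Fin 3) : ContDiff ℝ (⊤ : ℕ∞) (pd i f) :=
  (hf.fderiv_right (by simp)).clm_apply contDiff_const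

lemma pd_pd (hf : ContDiff ℝ (⊤ : ℕ∞) f) (i j : Fin 3) (x : E3) :
    pd j (pd i f) x
      = fderiv ℝ (fderiv ℝ f) x (EuclideanSpace.single j 1) (EuclideanSpace.single i 1) := by
  have hd : DifferentiableAt ℝ (fderiv ℝ f) x :=
    ((hf.fderiv_right (m := (⊤ : ℕ∞)) (by simp)).differentiable (by simp)).differentiableAt
  show fderiv ℝ (fun y => (fderiv ℝ f y) (EuclideanSpace.single i 1)) x
      (EuclideanSpace.single j 1) = _
  rw [fderiv_clm_apply hd (differentiableAt_const _)]
  simp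

lemma pd_symm (hf : ContDiff ℝ (⊤ : ℕ∞) f) (i j : Fin 3) (x : E3) :
    pd j (pd i f) x = pd i (pd j f) x := by
  rw [pd_pd hf, pd_pd hf]
  exact second_derivative_symmetric
    (fun y => (hf.differentiable (by simp) y).hasFDerivAt)
    (((hf.fderiv_right (m := (⊤ : ℕ∞)) (by simp)).differentiable (by simp) x).hasFDerivAt) _ _

lemma lap_eq (f : E3 → ℝ) (x : E3) : lap f x = ∑ k : Fin 3, pd k (pd k f) x := rfl

end Helpers
/-- Divergence identity for the energy–momentum tensor:
`∑_j ∂_j T_{ij} = -(∂_i V) u²`. -/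
theorem emTensor_divergence
    (V : E3 → ℝ) (hV : ContDiff ℝ 1 V) (E : ℝ)
    (u φ : E3 → ℝ) (hu : ContDiff ℝ (⊤ : ℕ∞) u) (hφ : ContDiff ℝ (⊤ : ℕ∞) φ)
    (hueq : ∀ x : E3, -(lap u x) + E * u x + V x * u x - φ x * u x = 0)
    (hφeq : ∀ x : E3, -(lap φ x) = (u x) ^ 2) :
    ∀ (i : Fin 3) (x : E3),
      (∑ j : Fin 3, pd j (fun y => emTensor V E u φ i j y) x)
        = -(pd i V x) * (u x) ^ 2 := by
  intro i x
  -- basic differentiability facts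
  have hud : Differentiable ℝ u := hu.differentiable (by simp)
  have hφd : Differentiable ℝ φ := hφ.differentiable (by simp)
  have hVd : Differentiable ℝ V := hV.differentiable (by simp)
  have hpud : ∀ k : Fin 3, Differentiable ℝ (pd k u) :=
    fun k => (contDiff_pd hu k).differentiable (by simp)
  have hpφd : ∀ k : Fin 3, Differentiable ℝ (pd k φ) :=
    fun k => (contDiff_pd hφ k).differentiable (by simp)
  -- derivative of the "A part"  2 ∂ᵢu ∂ⱼu + ∂ᵢφ ∂ⱼφ
  have hA : ∀ j : Fin 3,
      pd j (fun y => 2 * pd i u y * pd j u y + pd i φ y * pd j φ y) x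
        = 2 * (pd j (pd i u) x * pd j u x + pd i u x * pd j (pd j u) x)
          + (pd j (pd i φ) x * pd j φ x + pd i φ x * pd j (pd j φ) x) := by
    intro j
    rw [pd_add (((hpud i).const_mul 2).fun_mul (hpud j) x) ((hpφd i).fun_mul (hpφd j) x),
      pd_mul (((hpud i).const_mul 2) x) (hpud j x),
      pd_mul (hpφd i x) (hpφd j x),
      pd_const_mul 2 (hpud i x)]
    ring
  -- derivative of the "trace part" S
  have dA : DifferentiableAt ℝ (fun y => ∑ k : Fin 3, pd k u y ^ 2) x :=
    DifferentiableAt.fun_sum fun k _ => ((hpud k) x).pow 2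
  have dB : DifferentiableAt ℝ (fun y => (1 : ℝ) / 2 * ∑ k : Fin 3, pd k φ y ^ 2) x :=
    (DifferentiableAt.fun_sum fun k _ => ((hpφd k) x).pow 2).const_mul _
  have dC : DifferentiableAt ℝ (fun y => V y * u y ^ 2) x :=
    (hVd x).mul ((hud x).pow 2)
  have dD : DifferentiableAt ℝ (fun y => φ y * u y ^ 2) x :=
    (hφd x).mul ((hud x).pow 2)
  have dF : DifferentiableAt ℝ (fun y => E * u y ^ 2) x :=
    ((hud x).pow 2).const_mul E
  have hS : pd i (fun y =>
        (∑ k : Fin 3, pd k u y ^ 2) + 1 / 2 * (∑ k : Fin 3, pd k φ y ^ 2)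
          + V y * u y ^ 2 - φ y * u y ^ 2 + E * u y ^ 2) x
      = (∑ k : Fin 3, 2 * pd k u x * pd i (pd k u) x)
        + 1 / 2 * (∑ k : Fin 3, 2 * pd k φ x * pd i (pd k φ) x)
        + (pd i V x * u x ^ 2 + V x * (2 * u x * pd i u x))
        - (pd i φ x * u x ^ 2 + φ x * (2 * u x * pd i u x))
        + E * (2 * u x * pd i u x) := by
    rw [pd_add (((dA.fun_add dB).fun_add dC).fun_sub dD) dF,
      pd_sub ((dA.fun_add dB).fun_add dC) dD,
      pd_add (dA.fun_add dB) dC,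
      pd_add dA dB,
      pd_sum Finset.univ _ (fun k _ => ((hpud k) x).fun_pow 2),
      pd_const_mul _ (DifferentiableAt.fun_sum fun k _ => ((hpφd k) x).fun_pow 2),
      pd_sum Finset.univ _ (fun k _ => ((hpφd k) x).fun_pow 2),
      pd_mul (hVd x) ((hud x).fun_pow 2),
      pd_mul (hφd x) ((hud x).fun_pow 2),
      pd_const_mul E ((hud x).fun_pow 2),
      pd_sq (hud x)]
    have h1 : ∑ k : Fin 3, pd i (fun y => pd k u y ^ 2) x
        = ∑ k : Fin 3, 2 * pd k u x * pd i (pd k u) x :=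
      Finset.sum_congr rfl fun k _ => pd_sq (hpud k x)
    have h2 : ∑ k : Fin 3, pd i (fun y => pd k φ y ^ 2) x
        = ∑ k : Fin 3, 2 * pd k φ x * pd i (pd k φ) x :=
      Finset.sum_congr rfl fun k _ => pd_sq (hpφd k x)
    rw [h1, h2]
  -- per-component derivative of the tensor
  have hT : ∀ j : Fin 3, pd j (fun y => emTensor V E u φ i j y) x
      = (2 * (pd j (pd i u) x * pd j u x + pd i u x * pd j (pd j u) x)
          + (pd j (pd i φ) x * pd j φ x + pd i φ x * pd j (pd j φ) x))
        - (if i = j then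
            (∑ k : Fin 3, 2 * pd k u x * pd i (pd k u) x)
              + 1 / 2 * (∑ k : Fin 3, 2 * pd k φ x * pd i (pd k φ) x)
              + (pd i V x * u x ^ 2 + V x * (2 * u x * pd i u x))
              - (pd i φ x * u x ^ 2 + φ x * (2 * u x * pd i u x))
              + E * (2 * u x * pd i u x)
          else 0) := by
    intro j
    by_cases h : i = j
    · subst h
      simp only [emTensor, eq_self_iff_true, if_true]
      rw [pd_sub ((((hpud i).const_mul 2).fun_mul (hpud i)).fun_add ((hpφd i).fun_mul (hpφd i)) x)
          ((((dA.fun_add dB).fun_add dC).fun_sub dD).fun_add dF),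
        hA i, hS]
    · simp only [emTensor, if_neg h, sub_zero]
      rw [hA j]
  -- sum up
  simp only [hT]
  rw [Finset.sum_sub_distrib, Finset.sum_ite_eq]
  simp only [Finset.mem_univ, if_true]
  -- PDE facts at x
  have hU : pd 0 (pd 0 u) x + pd 1 (pd 1 u) x + pd 2 (pd 2 u) x
      = E * u x + V x * u x - φ x * u x := by
    have := hueq x
    rw [lap_eq, Fin.sum_univ_three] at this
    linarith
  have hP : pd 0 (pd 0 φ) x + pd 1 (pd 1 φ) x + pd 2 (pd 2 φ) x = -(u x ^ 2) := by
    have := hφeq x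
    rw [lap_eq, Fin.sum_univ_three] at this
    linarith
  have hsU : ∀ j : Fin 3, pd j (pd i u) x = pd i (pd j u) x := fun j => pd_symm hu i j x
  have hsP : ∀ j : Fin 3, pd j (pd i φ) x = pd i (pd j φ) x := fun j => pd_symm hφ i j x
  simp only [Fin.sum_univ_three]
  linear_combination 2 * pd i u x * hU + pd i φ x * hP
    + (2 * pd 0 u x) * hsU 0 + (2 * pd 1 u x) * hsU 1 + (2 * pd 2 u x) * hsU 2
    + pd 0 φ x * hsP 0 + pd 1 φ x * hsP 1 + pd 2 φ x * hsP 2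
end
end
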